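/- Let g, g₀ : ℝ → ℂ be measurable with ∫_ℝ ξ²|g₀(ξ)|² dξ < ∞ and ∫_ℝ ξ²|g(ξ)|² dξ < ∞. Suppose ∫_ℝ ξ²|g|² dξ ≤ C̃₀ ∫_ℝ ξ²|g₀|² dξ + C̃₁ with C̃₀ > 0, C̃₁ ≥ 0, and that there exist R > 0 and γ₂ ∈ (0,1) with ∫_{{|ξ| ≥ R}} ξ²|g₀|² dξ ≤ γ₂ ∫_ℝ ξ²|g₀|² dξ. Then for every constant C₁ ≥ C̃₀/(1−γ₂) and every η ≥ R: ∫_{{|ξ| < η}} ξ²|g(ξ)|² dξ ≤ C₁ ∫_{{|ξ| < η}} ξ²|g₀(ξ)|² dξ + C̃₁. -/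

import Mathlib

open MeasureTheory Real

/-!
Splitting `∫ ξ² |g₀|²` at `|ξ| = R`, the tail hypothesis says that the part over `|ξ| < R`
carries at least the fraction `1 - γ₂` of the whole, hence so does the part over `|ξ| < η`.
Bounding the localized integral of `g` by its global one and then using the global bound
gives
`∫_{|ξ|<η} ξ² |g|² ≤ C̃₀ ∫ ξ² |g₀|² + C̃₁ ≤ C̃₀ / (1 - γ₂) ∫_{|ξ|<η} ξ² |g₀|² + C̃₁`.
-/

section

variable {α : Type*} [MeasurableSpace α] {μ : Measure α}

theorem one_sub_mul_integral_le_setIntegral {f : α → ℝ} (hf : Integrable f μ) {s : Set α}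
    (hs : MeasurableSet s) {γ : ℝ} (htail : ∫ x in sᶜ, f x ∂μ ≤ γ * ∫ x, f x ∂μ) :
    (1 - γ) * ∫ x, f x ∂μ ≤ ∫ x in s, f x ∂μ := by
  have hsplit := integral_add_compl hs hf
  linarith

theorem setIntegral_le_mul_setIntegral_add_of_setIntegral_compl_le {f f₀ : α → ℝ}
    (hf : Integrable f μ) (hf_nonneg : 0 ≤ᵐ[μ] f) (hf₀ : Integrable f₀ μ)
    (hf₀_nonneg : 0 ≤ᵐ[μ] f₀) {s t : Set α} (hs : MeasurableSet s) (hst : s ⊆ t)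
    {c₀ c₁ γ C : ℝ} (hc₀ : 0 ≤ c₀) (hγ : γ < 1) (hC : c₀ / (1 - γ) ≤ C)
    (hb : ∫ x, f x ∂μ ≤ c₀ * ∫ x, f₀ x ∂μ + c₁)
    (htail : ∫ x in sᶜ, f₀ x ∂μ ≤ γ * ∫ x, f₀ x ∂μ) :
    ∫ x in t, f x ∂μ ≤ C * ∫ x in t, f₀ x ∂μ + c₁ := by
  have hγ' : 0 < 1 - γ := sub_pos.mpr hγ
  have hbulk : (1 - γ) * ∫ x, f₀ x ∂μ ≤ ∫ x in t, f₀ x ∂μ :=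
    (one_sub_mul_integral_le_setIntegral hf₀ hs htail).trans
      (setIntegral_mono_set hf₀.integrableOn (ae_restrict_of_ae hf₀_nonneg)
        (Filter.Eventually.of_forall hst))
  have hloc_nonneg : 0 ≤ ∫ x in t, f₀ x ∂μ :=
    integral_nonneg_of_ae (ae_restrict_of_ae hf₀_nonneg)
  calc ∫ x in t, f x ∂μ ≤ ∫ x, f x ∂μ := setIntegral_le_integral hf hf_nonneg
    _ ≤ c₀ * ∫ x, f₀ x ∂μ + c₁ := hb
    _ = c₀ / (1 - γ) * ((1 - γ) * ∫ x, f₀ x ∂μ) + c₁ := by field_simp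
    _ ≤ c₀ / (1 - γ) * ∫ x in t, f₀ x ∂μ + c₁ := by gcongr
    _ ≤ C * ∫ x in t, f₀ x ∂μ + c₁ := by gcongr

end

theorem localized_weighted_bound_general (Ct0 Ct1 R γ₂ : ℝ) (hCt0 : 0 < Ct0)
    (hγ₂ : γ₂ ∈ Set.Ioo (0 : ℝ) 1) (g g₀ : ℝ → ℂ)
    (hint : Integrable (fun ξ : ℝ => ξ ^ 2 * ‖g ξ‖ ^ 2))
    (hint₀ : Integrable (fun ξ : ℝ => ξ ^ 2 * ‖g₀ ξ‖ ^ 2))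
    (hb : (∫ ξ : ℝ, ξ ^ 2 * ‖g ξ‖ ^ 2) ≤ Ct0 * (∫ ξ : ℝ, ξ ^ 2 * ‖g₀ ξ‖ ^ 2) + Ct1)
    (htail : (∫ ξ in {ξ : ℝ | R ≤ |ξ|}, ξ ^ 2 * ‖g₀ ξ‖ ^ 2) ≤
      γ₂ * ∫ ξ : ℝ, ξ ^ 2 * ‖g₀ ξ‖ ^ 2)
    (C₁ : ℝ) (hC₁ : Ct0 / (1 - γ₂) ≤ C₁) (η : ℝ) (hη : R ≤ η) :
    (∫ ξ in {ξ : ℝ | |ξ| < η}, ξ ^ 2 * ‖g ξ‖ ^ 2) ≤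
      C₁ * (∫ ξ in {ξ : ℝ | |ξ| < η}, ξ ^ 2 * ‖g₀ ξ‖ ^ 2) + Ct1 := by
  have hcompl : {ξ : ℝ | |ξ| < R}ᶜ = {ξ : ℝ | R ≤ |ξ|} := by
    ext ξ
    simp
  refine setIntegral_le_mul_setIntegral_add_of_setIntegral_compl_le hint
    (ae_of_all _ fun ξ => by positivity) hint₀ (ae_of_all _ fun ξ => by positivity)
    (measurableSet_lt continuous_abs.measurable measurable_const)
    (fun ξ (hξ : |ξ| < R) => hξ.trans_le hη) hCt0.le hγ₂.2 hC₁ hb ?_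
  rwa [hcompl]

/-- Claim #2 in the proof of the Abstract Interpolation Lemma.
A frequency-localized weighted `L²` bound for `g` in terms of `g₀`, uniform in the
truncation radius `η ≥ R`, from a global weighted bound and a tail hypothesis on `g₀`. -/
theorem localized_weighted_bound (Ct0 Ct1 R γ₂ : ℝ) (hCt0 : 0 < Ct0) (hCt1 : 0 ≤ Ct1)
    (hR : 0 < R) (hγ₂ : γ₂ ∈ Set.Ioo (0 : ℝ) 1) (g g₀ : ℝ → ℂ)
    (hg : Measurable g) (hg₀ : Measurable g₀)
    (hint : Integrable (fun ξ : ℝ => ξ ^ 2 * ‖g ξ‖ ^ 2))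
    (hint₀ : Integrable (fun ξ : ℝ => ξ ^ 2 * ‖g₀ ξ‖ ^ 2))
    (hb : (∫ ξ : ℝ, ξ ^ 2 * ‖g ξ‖ ^ 2) ≤ Ct0 * (∫ ξ : ℝ, ξ ^ 2 * ‖g₀ ξ‖ ^ 2) + Ct1)
    (htail : (∫ ξ in {ξ : ℝ | R ≤ |ξ|}, ξ ^ 2 * ‖g₀ ξ‖ ^ 2) ≤
      γ₂ * ∫ ξ : ℝ, ξ ^ 2 * ‖g₀ ξ‖ ^ 2)
    (C₁ : ℝ) (hC₁ : Ct0 / (1 - γ₂) ≤ C₁) (η : ℝ) (hη : R ≤ η) :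
    (∫ ξ in {ξ : ℝ | |ξ| < η}, ξ ^ 2 * ‖g ξ‖ ^ 2) ≤
      C₁ * (∫ ξ in {ξ : ℝ | |ξ| < η}, ξ ^ 2 * ‖g₀ ξ‖ ^ 2) + Ct1 :=
  localized_weighted_bound_general Ct0 Ct1 R γ₂ hCt0 hγ₂ g g₀ hint hint₀ hb htail C₁ hC₁ η hη
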